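/- arXiv:1904.07700 — 7 statements merged into one kernel-verified Lean document; each statement's English description precedes it below -/
import Mathlib

section
/- Let n ≥ 1 and let T : 𝔽_2^n → 𝔽_2^n be an affine bijection (T(x) = Λx + c with Λ ∈ GL_n(𝔽_2) and c ∈ 𝔽_2^n) such that gc_T := T^{-1} ∘ gc_n is a cyclic binary Gray code. Then T is a translation followed by a coordinate permutation: there exist a permutation σ of {0,…,n−1} and e ∈ 𝔽_2^n such that T(x) = (x + e)^σ for all x ∈ 𝔽_2^n. -/
/-- `bin_n : ℤ/p^nℤ → 𝔽_p^n`, the vector of p-adic digits. -/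
def binN (p n : ℕ) (i : ZMod (p ^ n)) : Fin n → ZMod p :=
  fun ν => (((i.val / p ^ (ν : ℕ)) % p : ℕ) : ZMod p)

/-- Binary reflected Gray code via right shift: `x ↦ x + (x ▷ 1)`. -/
def gcBin (n : ℕ) (x : Fin n → ZMod 2) : Fin n → ZMod 2 :=
  fun i => x i + if h : (i : ℕ) + 1 < n then x ⟨(i : ℕ) + 1, h⟩ else 0

/-! Between the consecutive integers `2^k - 1` and `2^k` the reflected Gray code flips exactly
bit `k`. Since `T⁻¹ y = Λ⁻¹ (y - c)`, the Gray property at `i = 2^k - 1` says that `Λ⁻¹ eₖ` has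
Hamming weight one. So `Λ⁻¹` permutes the unit vectors, `Λ` is a coordinate permutation
`x ↦ x^σ`, and `T x = (x + Λ⁻¹ c)^σ`. -/

lemma binN_two_apply {n : ℕ} (i : ZMod (2 ^ n)) (ν : Fin n) :
    binN 2 n i ν = if i.val.testBit ν then 1 else 0 := by
  rw [binN, Nat.testBit_eq_decide_div_mod_eq]
  rcases Nat.mod_two_eq_zero_or_one (i.val / 2 ^ (ν : ℕ)) with h | h <;> simp [h]

lemma binN_two_pow {n : ℕ} (k : Fin n) : binN 2 n (2 ^ (k : ℕ)) = Pi.single k 1 := by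
  funext ν
  have hcast : (2 : ZMod (2 ^ n)) ^ (k : ℕ) = ((2 ^ (k : ℕ) : ℕ) : ZMod (2 ^ n)) := by norm_cast
  rw [binN_two_apply, hcast, ZMod.val_natCast_of_lt (Nat.pow_lt_pow_right one_lt_two k.isLt),
    Nat.testBit_two_pow, Pi.single_apply]
  simp [Fin.ext_iff, eq_comm]

lemma binN_two_pow_sub_one {n : ℕ} (k : Fin n) :
    binN 2 n (2 ^ (k : ℕ) - 1) = fun ν => if ν < k then 1 else 0 := by
  funext ν
  have hval : ((2 : ZMod (2 ^ n)) ^ (k : ℕ) - 1).val = 2 ^ (k : ℕ) - 1 := by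
    have hcast : (2 : ZMod (2 ^ n)) ^ (k : ℕ) - 1 = ((2 ^ (k : ℕ) - 1 : ℕ) : ZMod (2 ^ n)) := by
      rw [Nat.cast_sub Nat.one_le_two_pow]; norm_cast
    rw [hcast]
    exact ZMod.val_natCast_of_lt
      ((Nat.sub_le _ _).trans_lt (Nat.pow_lt_pow_right one_lt_two k.isLt))
  rw [binN_two_apply, hval, Nat.testBit_two_pow_sub_one]
  simp only [decide_eq_true_eq, Fin.lt_def]

lemma gcBin_sub (n : ℕ) (a b : Fin n → ZMod 2) :
    gcBin n (a - b) = gcBin n a - gcBin n b := by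
  funext i
  simp only [Pi.sub_apply, gcBin]
  split <;> ring

lemma gcBin_binN_two_pow_sub_one_sub_gcBin_binN_two_pow {n : ℕ} (k : Fin n) :
    gcBin n (binN 2 n (2 ^ (k : ℕ) - 1)) - gcBin n (binN 2 n (2 ^ (k : ℕ))) = Pi.single k 1 := by
  rw [← gcBin_sub, binN_two_pow_sub_one, binN_two_pow]
  funext i
  simp only [gcBin, Pi.sub_apply, Pi.single_apply, Fin.lt_def, Fin.ext_iff]
  split_ifs <;> first | omega | decide

lemma exists_eq_single_of_hammingNorm_eq_one {ι : Type*} [Fintype ι] [DecidableEq ι]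
    {v : ι → ZMod 2} (h : hammingNorm v = 1) : ∃ j, v = Pi.single j 1 := by
  obtain ⟨j, hj⟩ := Finset.card_eq_one.mp h
  refine ⟨j, funext fun i => ?_⟩
  have hi := Finset.ext_iff.mp hj i
  simp only [Finset.mem_filter, Finset.mem_univ, true_and, Finset.mem_singleton] at hi
  rcases eq_or_ne i j with rfl | hij
  · simpa using (show ∀ x : ZMod 2, x ≠ 0 → x = 1 by decide) _ (hi.mpr rfl)
  · simpa [hij] using hi

lemma LinearEquiv.symm_apply_eq_sub_of_leftInverse {R M N : Type*} [Semiring R]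
    [AddCommMonoid M] [AddCommGroup N] [Module R M] [Module R N] {Λ : M ≃ₗ[R] N} {c : N}
    {T : M → N} {Tinv : N → M} (hT : ∀ x, T x = Λ x + c) (hTinv : Function.LeftInverse Tinv T)
    (y : N) : Tinv y = Λ.symm (y - c) := by
  rw [← hTinv (Λ.symm (y - c)), hT, Λ.apply_symm_apply, sub_add_cancel]

lemma LinearMap.eq_funLeft_of_map_single {R ι : Type*} [Semiring R] [Finite ι] [DecidableEq ι]
    (f : (ι → R) →ₗ[R] (ι → R)) (σ : Equiv.Perm ι)
    (h : ∀ k, f (Pi.single (σ k) 1) = Pi.single k 1) : f = LinearMap.funLeft R R σ := by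
  refine (Pi.basisFun R ι).ext fun j => ?_
  rw [Pi.basisFun_apply, ← σ.apply_symm_apply j, h]
  ext i
  simp [LinearMap.funLeft_apply, Pi.single_apply, σ.eq_symm_apply]

theorem affine_gray_transform_is_permuted_translation_general (n : ℕ)
    (T Tinv : (Fin n → ZMod 2) → (Fin n → ZMod 2))
    (Λ : (Fin n → ZMod 2) ≃ₗ[ZMod 2] (Fin n → ZMod 2)) (c : Fin n → ZMod 2)
    (hT : ∀ x, T x = Λ x + c)
    (hTinv₁ : Function.LeftInverse Tinv T)
    (hGray : ∀ i : ZMod (2 ^ n),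
      hammingDist ((Tinv ∘ gcBin n) (binN 2 n i)) ((Tinv ∘ gcBin n) (binN 2 n (i + 1))) = 1) :
    ∃ (σ : Equiv.Perm (Fin n)) (e : Fin n → ZMod 2),
      ∀ x : Fin n → ZMod 2, T x = fun i => x (σ i) + e (σ i) := by
  have hTinv := LinearEquiv.symm_apply_eq_sub_of_leftInverse hT hTinv₁
  have hunit (k : Fin n) : ∃ j, Λ.symm (Pi.single k 1) = Pi.single j 1 := by
    have h := hGray (2 ^ (k : ℕ) - 1)
    rw [sub_add_cancel, Function.comp_apply, Function.comp_apply, hTinv, hTinv, hammingDist_comm,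
      hammingDist_eq_hammingNorm, ← map_neg, ← map_add, neg_add_eq_sub, sub_sub_sub_cancel_right,
      gcBin_binN_two_pow_sub_one_sub_gcBin_binN_two_pow] at h
    exact exists_eq_single_of_hammingNorm_eq_one h
  choose π hπ using hunit
  have hπ_inj : π.Injective := fun k l hkl => by
    have h := Λ.symm.injective ((hπ k).trans (hkl ▸ (hπ l).symm))
    simpa [Pi.single_apply] using congrFun h k
  let σ := Equiv.ofBijective π hπ_inj.bijective_of_finite
  have hΛ := Λ.toLinearMap.eq_funLeft_of_map_single σ fun k => by
    rw [Equiv.ofBijective_apply, ← hπ k, LinearEquiv.coe_coe, Λ.apply_symm_apply]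
  refine ⟨σ, c ∘ σ.symm, fun x => ?_⟩
  ext i
  rw [hT, Pi.add_apply, ← LinearEquiv.coe_toLinearMap, hΛ, LinearMap.funLeft_apply,
    Function.comp_apply, Equiv.symm_apply_apply]

/-- if `T` is an affine bijection of `𝔽_2^n` such that
`gc_T = T⁻¹ ∘ gc_n` is a cyclic binary Gray code, then `T` is a translation followed by a
coordinate permutation: `T(x) = (x + e)^σ`. -/
theorem affine_gray_transform_is_permuted_translation (n : ℕ) (hn : 1 ≤ n)
    (T Tinv : (Fin n → ZMod 2) → (Fin n → ZMod 2))
    (Λ : (Fin n → ZMod 2) ≃ₗ[ZMod 2] (Fin n → ZMod 2)) (c : Fin n → ZMod 2)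
    (hT : ∀ x, T x = Λ x + c)
    (hTinv₁ : Function.LeftInverse Tinv T) (hTinv₂ : Function.RightInverse Tinv T)
    (hbij : Function.Bijective (Tinv ∘ gcBin n))
    (hGray : ∀ i : ZMod (2 ^ n),
      hammingDist ((Tinv ∘ gcBin n) (binN 2 n i)) ((Tinv ∘ gcBin n) (binN 2 n (i + 1))) = 1) :
    ∃ (σ : Equiv.Perm (Fin n)) (e : Fin n → ZMod 2),
      ∀ x : Fin n → ZMod 2, T x = fun i => x (σ i) + e (σ i) :=
  affine_gray_transform_is_permuted_translation_general n T Tinv Λ c hT hTinv₁ hGray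
end

section
/- Let n ≥ 1, e ∈ 𝔽_2^n and d ∈ {0,…,n−1}. The number of maps of the form gc_T = T^{-1} ∘ gc_n, with T an affine bijection of 𝔽_2^n, that are cyclic binary Gray codes with prescribed starting point gc_T(bin_n(0)) = e and prescribed direction gc_T(bin_n(0)) + gc_T(bin_n(2^n − 1)) = e_d, is exactly (n−1)!. -/
/-- The standard unit vector `e_i`. -/
def stdBasis (p n : ℕ) (i : Fin n) : Fin n → ZMod p := fun j => if j = i then 1 else 0

namespace AGC
variable {n : ℕ}

def vVec (n : ℕ) (k : Fin n) : Fin n → ZMod 2 := fun j => if (j : ℕ) ≤ (k : ℕ) then 1 else 0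

lemma stdBasis_injective : Function.Injective (stdBasis 2 n) := by
  intro i j h
  by_contra hne
  have := congrFun h i
  rw [stdBasis, stdBasis] at this
  simp only [if_pos rfl, if_neg hne] at this
  exact one_ne_zero this

lemma add_self (x : Fin n → ZMod 2) : x + x = 0 := by
  funext j
  exact CharTwo.add_self_eq_zero _

lemma gcBin_vVec (k : Fin n) : gcBin n (vVec n k) = stdBasis 2 n k := by
  funext i
  simp only [gcBin, vVec, stdBasis, Fin.ext_iff]
  split_ifs <;> first | rfl | decide | (exfalso; omega)

lemma gcBin_add (x y : Fin n → ZMod 2) : gcBin n (x + y) = gcBin n x + gcBin n y := by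
  funext i
  simp only [gcBin, Pi.add_apply]
  split <;> ring

lemma gcBin_zero : gcBin n 0 = 0 := by
  funext i
  simp only [gcBin, Pi.zero_apply]
  split <;> simp

lemma gcBin_smul (c : ZMod 2) (x : Fin n → ZMod 2) : gcBin n (c • x) = c • gcBin n x := by
  funext i
  simp only [gcBin, Pi.smul_apply, smul_eq_mul]
  split <;> ring

def gcLin (n : ℕ) : (Fin n → ZMod 2) →ₗ[ZMod 2] (Fin n → ZMod 2) where
  toFun := gcBin n
  map_add' := gcBin_add
  map_smul' := gcBin_smul

lemma gcBin_injective : Function.Injective (gcBin n) := by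
  have : ∀ x : Fin n → ZMod 2, gcBin n x = 0 → x = 0 := by
    intro x hx
    have key : ∀ d : ℕ, ∀ i : Fin n, n - (i : ℕ) ≤ d + 1 → x i = 0 := by
      intro d
      induction d with
      | zero =>
        intro i hi
        have h1 : ¬ ((i : ℕ) + 1 < n) := by omega
        have := congrFun hx i
        simpa [gcBin, h1] using this
      | succ d ih =>
        intro i hi
        have := congrFun hx i
        simp only [gcBin, Pi.zero_apply] at this
        by_cases h1 : (i : ℕ) + 1 < n
        · rw [dif_pos h1, ih ⟨(i : ℕ) + 1, h1⟩ (by simp; omega), add_zero] at this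
          exact this
        · rw [dif_neg h1, add_zero] at this; exact this
    funext i
    exact key n i (by omega)
  intro x y h
  have h2 : gcBin n (x + y) = 0 := by
    rw [gcBin_add, h, add_self]
  have h3 := this _ h2
  calc x = x + (y + y) := by rw [add_self, add_zero]
    _ = (x + y) + y := by ring
    _ = y := by rw [h3, zero_add]

lemma gcBin_bijective : Function.Bijective (gcBin n) := by
  have : Function.Injective (gcLin n) := gcBin_injective
  exact ⟨this, (LinearMap.injective_iff_surjective (f := gcLin n)).mp this⟩

lemma hd_one_iff (a b : Fin n → ZMod 2) :
    hammingDist a b = 1 ↔ ∃ j, a + b = stdBasis 2 n j := by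
  have key : ∀ u v : ZMod 2, (u ≠ v ↔ u + v = 1) := by decide
  have key2 : ∀ u v : ZMod 2, (u = v ↔ u + v = 0) := by decide
  rw [hammingDist, Finset.card_eq_one]
  constructor
  · rintro ⟨j, hj⟩
    refine ⟨j, funext fun i => ?_⟩
    have hmem := Finset.ext_iff.mp hj i
    simp only [Finset.mem_filter, Finset.mem_univ, true_and, Finset.mem_singleton] at hmem
    by_cases hij : i = j
    · subst hij
      simp only [stdBasis, if_pos rfl, Pi.add_apply]
      exact (key _ _).mp (hmem.mpr rfl)
    · simp only [stdBasis, if_neg hij, Pi.add_apply]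
      refine (key2 _ _).mp ?_
      by_contra hne
      exact hij (hmem.mp hne)
  · rintro ⟨j, hj⟩
    refine ⟨j, Finset.ext fun i => ?_⟩
    simp only [Finset.mem_filter, Finset.mem_univ, true_and, Finset.mem_singleton]
    have hji := congrFun hj i
    simp only [Pi.add_apply, stdBasis] at hji
    constructor
    · intro hne
      by_contra hij
      rw [if_neg hij] at hji
      exact hne ((key2 _ _).mpr hji)
    · intro hij
      subst hij
      rw [if_pos rfl] at hji
      exact (key _ _).mpr hji

lemma pow_sub_one_div {a b : ℕ} (h : b ≤ a) : (2 ^ a - 1) / 2 ^ b = 2 ^ (a - b) - 1 := by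
  have hb : 0 < (2:ℕ) ^ b := Nat.two_pow_pos b
  have h2 : (2:ℕ) ^ b * 2 ^ (a - b) = 2 ^ a := by
    rw [← pow_add]; congr 1; omega
  have hc : 0 < (2:ℕ) ^ (a - b) := Nat.two_pow_pos _
  have h4 : (2:ℕ) ^ b * (2 ^ (a - b) - 1) = 2 ^ a - 2 ^ b := by
    rw [Nat.mul_sub, h2, mul_one]
  have hab : (2:ℕ) ^ b ≤ 2 ^ a := Nat.pow_le_pow_right (by norm_num) h
  have h3 : 2 ^ a - 1 = 2 ^ b * (2 ^ (a - b) - 1) + (2 ^ b - 1) := by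
    rw [h4]; omega
  rw [h3, Nat.mul_add_div hb, Nat.div_eq_of_lt (by omega), add_zero]

lemma pow_sub_one_digit {a ν : ℕ} (h : ν < a) : ((2 ^ a - 1) / 2 ^ ν) % 2 = 1 := by
  rw [pow_sub_one_div (le_of_lt h)]
  have h2 : (2:ℕ) ^ (a - ν) = 2 * 2 ^ (a - ν - 1) := by
    rw [← pow_succ']; congr 1; omega
  have h3 : 0 < (2:ℕ) ^ (a - ν - 1) := Nat.two_pow_pos _
  omega

lemma mod_of_ones (m t : ℕ) (h : ∀ j < t, (m / 2 ^ j) % 2 = 1) : m % 2 ^ t = 2 ^ t - 1 := by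
  induction t with
  | zero => exact Nat.mod_one m
  | succ t ih =>
    have h1 : m % 2 ^ (t + 1) = m % 2 ^ t + 2 ^ t * (m / 2 ^ t % 2) := by
      rw [pow_succ, Nat.mod_mul]
    have h2 : (2:ℕ) ^ (t + 1) = 2 * 2 ^ t := by rw [pow_succ]; ring
    have h3 : 0 < (2:ℕ) ^ t := Nat.two_pow_pos t
    rw [h1, ih (fun j hj => h j (by omega)), h t (by omega)]
    omega

lemma succ_digits (m k : ℕ) (hk0 : (m / 2 ^ k) % 2 = 0)
    (hk1 : ∀ j < k, (m / 2 ^ j) % 2 = 1) :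
    (∀ ν < k, ((m + 1) / 2 ^ ν) % 2 = 0) ∧ ((m + 1) / 2 ^ k) % 2 = 1 ∧
      (∀ ν, k < ν → (m + 1) / 2 ^ ν = m / 2 ^ ν) := by
  have hk : 0 < (2:ℕ) ^ k := Nat.two_pow_pos k
  have hmod : m % 2 ^ k = 2 ^ k - 1 := mod_of_ones m k hk1
  set q := m / 2 ^ k with hq
  have hdm : 2 ^ k * q + m % 2 ^ k = m := Nat.div_add_mod m (2 ^ k)
  have hm1 : m + 1 = 2 ^ k * (q + 1) := by rw [Nat.mul_succ]; omega
  refine ⟨fun ν hν => ?_, ?_, fun ν hν => ?_⟩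
  · have hsp : (2:ℕ) ^ k = 2 ^ ν * 2 ^ (k - ν) := by rw [← pow_add]; congr 1; omega
    have hν2 : (2:ℕ) ^ (k - ν) = 2 * 2 ^ (k - ν - 1) := by rw [← pow_succ']; congr 1; omega
    rw [hm1, hsp, mul_assoc, Nat.mul_div_cancel_left _ (Nat.two_pow_pos ν), hν2,
      mul_assoc, Nat.mul_mod_right]
  · rw [hm1, Nat.mul_div_cancel_left _ hk]; omega
  · have hsp : (2:ℕ) ^ ν = 2 ^ k * 2 ^ (ν - k) := by rw [← pow_add]; congr 1; omega
    have e1 : m / 2 ^ ν = q / 2 ^ (ν - k) := by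
      rw [hsp, ← Nat.div_div_eq_div_mul]
    have e2 : (m + 1) / 2 ^ ν = (q + 1) / 2 ^ (ν - k) := by
      rw [hsp, ← Nat.div_div_eq_div_mul, hm1, Nat.mul_div_cancel_left _ hk]
    rw [e1, e2, Nat.succ_div, if_neg, add_zero]
    intro hdvd
    have h2 : (2:ℕ) ∣ 2 ^ (ν - k) := dvd_pow_self 2 (by omega)
    have h3 := h2.trans hdvd
    omega

lemma exists_trailing {m : ℕ} (hm : m < 2 ^ n - 1) :
    ∃ k < n, (m / 2 ^ k) % 2 = 0 ∧ ∀ j < k, (m / 2 ^ j) % 2 = 1 := by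
  have hP : (m / 2 ^ n) % 2 = 0 := by rw [Nat.div_eq_of_lt (by omega)]
  have hex : ∃ j, (m / 2 ^ j) % 2 = 0 := ⟨n, hP⟩
  have hones : ∀ j < Nat.find hex, (m / 2 ^ j) % 2 = 1 := by
    intro j hj
    have := Nat.find_min hex hj
    omega
  refine ⟨Nat.find hex, ?_, Nat.find_spec hex, hones⟩
  by_contra h
  have hk : n ≤ Nat.find hex := le_of_not_gt h
  have hall : m % 2 ^ n = 2 ^ n - 1 := mod_of_ones m n (fun j hj => hones j (by omega))
  rw [Nat.mod_eq_of_lt (by omega)] at hall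
  omega

lemma binN_zero_eq (hn : 1 ≤ n) : binN 2 n (0 : ZMod (2 ^ n)) = 0 := by
  haveI : NeZero (2 ^ n) := ⟨(Nat.two_pow_pos n).ne'⟩
  funext ν
  simp [binN, ZMod.val_zero, Nat.zero_div]

lemma one_lt_two_pow (hn : 1 ≤ n) : 1 < 2 ^ n := by
  have : (2:ℕ) ^ 1 ≤ 2 ^ n := Nat.pow_le_pow_right (by norm_num) hn
  omega

lemma binN_sum_of_trailing (hn : 1 ≤ n) (i : ZMod (2 ^ n)) (k : Fin n)
    (h1 : i.val + 1 < 2 ^ n)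
    (hk0 : (i.val / 2 ^ (k : ℕ)) % 2 = 0)
    (hk1 : ∀ j < (k : ℕ), (i.val / 2 ^ j) % 2 = 1) :
    binN 2 n i + binN 2 n (i + 1) = vVec n k := by
  haveI : NeZero (2 ^ n) := ⟨(Nat.two_pow_pos n).ne'⟩
  haveI : Fact (1 < 2 ^ n) := ⟨one_lt_two_pow hn⟩
  have hval : (i + 1).val = i.val + 1 := by
    rw [ZMod.val_add, ZMod.val_one, Nat.mod_eq_of_lt h1]
  obtain ⟨hlt, heq, hgt⟩ := succ_digits i.val k hk0 hk1
  funext ν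
  simp only [binN, vVec, Pi.add_apply, hval]
  rcases lt_trichotomy (ν : ℕ) (k : ℕ) with h | h | h
  · rw [hk1 ν h, hlt ν h, if_pos (by omega)]
    norm_num
  · rw [show ((ν : ℕ) : ℕ) = (k : ℕ) from h, hk0, heq, if_pos le_rfl]
    norm_num
  · rw [hgt ν h, if_neg (by omega)]
    exact CharTwo.add_self_eq_zero _

lemma binN_succ_sum (hn : 1 ≤ n) (i : ZMod (2 ^ n)) :
    ∃ k : Fin n, binN 2 n i + binN 2 n (i + 1) = vVec n k := by
  haveI : NeZero (2 ^ n) := ⟨(Nat.two_pow_pos n).ne'⟩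
  haveI : Fact (1 < 2 ^ n) := ⟨one_lt_two_pow hn⟩
  have hvlt := ZMod.val_lt i
  by_cases h : i.val = 2 ^ n - 1
  · refine ⟨⟨n - 1, by omega⟩, ?_⟩
    have h0 : i + 1 = 0 := by
      rw [← ZMod.val_eq_zero, ZMod.val_add, ZMod.val_one, h]
      have h2 : 2 ^ n - 1 + 1 = 2 ^ n := by have := Nat.two_pow_pos n; omega
      rw [h2, Nat.mod_self]
    rw [h0, binN_zero_eq hn, add_zero]
    funext ν
    simp only [binN, vVec, h]
    rw [pow_sub_one_digit ν.isLt, if_pos (by have := ν.isLt; omega)]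
    exact Nat.cast_one
  · have hlt2 : i.val < 2 ^ n - 1 := by omega
    obtain ⟨k, hkn, hk0, hk1⟩ := exists_trailing hlt2
    exact ⟨⟨k, hkn⟩, binN_sum_of_trailing hn i ⟨k, hkn⟩ (by omega) hk0 hk1⟩

lemma binN_pow_sum (hn : 1 ≤ n) (k : Fin n) :
    binN 2 n ((2 ^ (k : ℕ) - 1 : ℕ) : ZMod (2 ^ n)) +
      binN 2 n (((2 ^ (k : ℕ) - 1 : ℕ) : ZMod (2 ^ n)) + 1) = vVec n k := by
  have hkpow : (2:ℕ) ^ (k : ℕ) < 2 ^ n := Nat.pow_lt_pow_right (by norm_num) k.isLt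
  have hpos : 0 < (2:ℕ) ^ (k : ℕ) := Nat.two_pow_pos _
  have hval : ((2 ^ (k : ℕ) - 1 : ℕ) : ZMod (2 ^ n)).val = 2 ^ (k : ℕ) - 1 :=
    ZMod.val_cast_of_lt (by omega)
  apply binN_sum_of_trailing hn
  · rw [hval]; omega
  · rw [hval, Nat.div_eq_of_lt (by omega)]
  · intro j hj
    rw [hval]
    exact pow_sub_one_digit hj

lemma binN_top (hn : 1 ≤ n) :
    binN 2 n ((2 ^ n - 1 : ℕ) : ZMod (2 ^ n)) = vVec n ⟨n - 1, by omega⟩ := by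
  have hval : ((2 ^ n - 1 : ℕ) : ZMod (2 ^ n)).val = 2 ^ n - 1 :=
    ZMod.val_cast_of_lt (by have := Nat.two_pow_pos n; omega)
  funext ν
  simp only [binN, vVec, hval]
  rw [pow_sub_one_digit ν.isLt, if_pos (by have := ν.isLt; omega)]
  exact Nat.cast_one

lemma basis_decomp (y : Fin n → ZMod 2) : y = ∑ k, y k • stdBasis 2 n k := by
  funext j
  rw [Finset.sum_apply]
  simp only [Pi.smul_apply, stdBasis, smul_eq_mul, mul_ite, mul_one, mul_zero]
  rw [Finset.sum_ite_eq]
  simp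

def permL (n : ℕ) (σ : Equiv.Perm (Fin n)) :
    (Fin n → ZMod 2) ≃ₗ[ZMod 2] (Fin n → ZMod 2) where
  toFun f := f ∘ σ
  invFun f := f ∘ σ.symm
  map_add' x y := rfl
  map_smul' c x := rfl
  left_inv f := by funext j; simp
  right_inv f := by funext j; simp

lemma permL_std (σ : Equiv.Perm (Fin n)) (k : Fin n) :
    permL n σ (stdBasis 2 n k) = stdBasis 2 n (σ.symm k) := by
  funext j
  show (if σ j = k then (1 : ZMod 2) else 0) = if j = σ.symm k then 1 else 0
  congr 1
  simp [Equiv.apply_eq_iff_eq_symm_apply]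

def gMap (n : ℕ) (e : Fin n → ZMod 2) (σ : Equiv.Perm (Fin n)) :
    (Fin n → ZMod 2) → (Fin n → ZMod 2) :=
  fun x => permL n σ.symm (gcBin n x) + e

lemma gMap_basis (e : Fin n → ZMod 2) (σ : Equiv.Perm (Fin n)) (k : Fin n) :
    gMap n e σ (vVec n k) = stdBasis 2 n (σ k) + e := by
  rw [gMap, gcBin_vVec, permL_std, Equiv.symm_symm]

lemma gMap_sum (e : Fin n → ZMod 2) (σ : Equiv.Perm (Fin n)) (x y : Fin n → ZMod 2) :
    gMap n e σ x + gMap n e σ y = permL n σ.symm (gcBin n (x + y)) := by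
  rw [gMap, gMap, gcBin_add, map_add]
  calc permL n σ.symm (gcBin n x) + e + (permL n σ.symm (gcBin n y) + e)
      = permL n σ.symm (gcBin n x) + permL n σ.symm (gcBin n y) + (e + e) := by ring
    _ = _ := by rw [add_self, add_zero]

lemma gMap_bijective (e : Fin n → ZMod 2) (σ : Equiv.Perm (Fin n)) :
    Function.Bijective (gMap n e σ) := by
  have h : gMap n e σ = (fun y => y + e) ∘ (permL n σ.symm) ∘ (gcBin n) := rfl
  rw [h]
  exact (Equiv.addRight e).bijective.comp ((permL n σ.symm).bijective.comp gcBin_bijective)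

lemma card_perm_fixed (n : ℕ) (a b : Fin n) :
    Nat.card {σ : Equiv.Perm (Fin n) // σ a = b} = (n - 1).factorial := by
  classical
  have E1 : {σ : Equiv.Perm (Fin n) // σ a = b} ≃ {σ : Equiv.Perm (Fin n) // σ a = a} :=
    { toFun := fun σ => ⟨σ.1.trans (Equiv.swap b a), by
        simp [σ.2, Equiv.swap_apply_left]⟩
      invFun := fun σ => ⟨σ.1.trans (Equiv.swap b a), by
        simp [σ.2, Equiv.swap_apply_right]⟩
      left_inv := fun σ => Subtype.ext (by ext x; simp [Equiv.swap_apply_self])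
      right_inv := fun σ => Subtype.ext (by ext x; simp [Equiv.swap_apply_self]) }
  have E2 : {σ : Equiv.Perm (Fin n) // σ a = a} ≃
      {f : Equiv.Perm (Fin n) // ∀ x, ¬ (x ≠ a) → f x = x} :=
    Equiv.subtypeEquivRight (by
      intro f
      constructor
      · intro h x hx
        rw [not_not] at hx
        subst hx
        exact h
      · intro h
        exact h a (by simp))
  have E3 : {f : Equiv.Perm (Fin n) // ∀ x, ¬ (x ≠ a) → f x = x} ≃
      Equiv.Perm {x : Fin n // x ≠ a} :=
    (Equiv.Perm.subtypeEquivSubtypePerm (fun x : Fin n => x ≠ a)).symm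
  rw [Nat.card_congr (E1.trans (E2.trans E3)), Nat.card_eq_fintype_card, Fintype.card_perm]
  congr 1
  simp [Fintype.card_subtype_compl]

end AGC

/-- there are exactly `(n-1)!` maps `gc_T = T⁻¹ ∘ gc_n` (with `T` an affine
bijection of `𝔽_2^n`) that are cyclic binary Gray codes with prescribed starting point `e`
and prescribed direction `d`. -/
theorem card_affine_gray_codes (n : ℕ) (hn : 1 ≤ n) (e : Fin n → ZMod 2) (dIdx : Fin n) :
    Nat.card {g : (Fin n → ZMod 2) → (Fin n → ZMod 2) //
      (∃ (Λ : (Fin n → ZMod 2) ≃ₗ[ZMod 2] (Fin n → ZMod 2)) (c : Fin n → ZMod 2),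
        ∀ x, Λ (g x) + c = gcBin n x) ∧
      Function.Bijective g ∧
      (∀ i : ZMod (2 ^ n),
        hammingDist (g (binN 2 n i)) (g (binN 2 n (i + 1))) = 1) ∧
      g (binN 2 n 0) = e ∧
      g (binN 2 n 0) + g (binN 2 n ((2 ^ n - 1 : ℕ) : ZMod (2 ^ n))) = stdBasis 2 n dIdx}
      = (n - 1).factorial := by
  classical
  have hlt : n - 1 < n := by omega
  have hF : ∀ σp : {σ : Equiv.Perm (Fin n) // σ ⟨n - 1, hlt⟩ = dIdx},
      (∃ (Λ : (Fin n → ZMod 2) ≃ₗ[ZMod 2] (Fin n → ZMod 2)) (c : Fin n → ZMod 2),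
        ∀ x, Λ (AGC.gMap n e σp.1 x) + c = gcBin n x) ∧
      Function.Bijective (AGC.gMap n e σp.1) ∧
      (∀ i : ZMod (2 ^ n),
        hammingDist (AGC.gMap n e σp.1 (binN 2 n i)) (AGC.gMap n e σp.1 (binN 2 n (i + 1))) = 1) ∧
      AGC.gMap n e σp.1 (binN 2 n 0) = e ∧
      AGC.gMap n e σp.1 (binN 2 n 0) +
        AGC.gMap n e σp.1 (binN 2 n ((2 ^ n - 1 : ℕ) : ZMod (2 ^ n))) = stdBasis 2 n dIdx := by
    rintro ⟨σ, hσ⟩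
    have hstart : AGC.gMap n e σ (binN 2 n 0) = e := by
      rw [AGC.binN_zero_eq hn]
      show AGC.permL n σ.symm (gcBin n 0) + e = e
      rw [AGC.gcBin_zero, map_zero, zero_add]
    refine ⟨⟨(AGC.permL n σ.symm).symm, (AGC.permL n σ.symm).symm e, fun x => ?_⟩,
      AGC.gMap_bijective e σ, fun i => ?_, hstart, ?_⟩
    · show (AGC.permL n σ.symm).symm (AGC.permL n σ.symm (gcBin n x) + e) + _ = _
      rw [map_add, LinearEquiv.symm_apply_apply, add_assoc, AGC.add_self, add_zero]
    · obtain ⟨k, hk⟩ := AGC.binN_succ_sum hn i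
      rw [AGC.hd_one_iff]
      exact ⟨σ k, by rw [AGC.gMap_sum, hk, AGC.gcBin_vVec, AGC.permL_std, Equiv.symm_symm]⟩
    · rw [AGC.binN_top hn, AGC.gMap_sum, AGC.binN_zero_eq hn, zero_add, AGC.gcBin_vVec,
        AGC.permL_std, Equiv.symm_symm, hσ]
  rw [← AGC.card_perm_fixed n ⟨n - 1, hlt⟩ dIdx]
  apply Eq.symm
  apply Nat.card_eq_of_bijective (fun σp => ⟨AGC.gMap n e σp.1, hF σp⟩)
  constructor
  · rintro ⟨σ1, h1⟩ ⟨σ2, h2⟩ h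
    have hval : AGC.gMap n e σ1 = AGC.gMap n e σ2 := congrArg Subtype.val h
    apply Subtype.ext
    apply Equiv.ext
    intro k
    have hk := congrFun hval (AGC.vVec n k)
    rw [AGC.gMap_basis, AGC.gMap_basis] at hk
    exact AGC.stdBasis_injective (add_right_cancel hk)
  · rintro ⟨g, ⟨Λ, c, hT⟩, hbij, hgray, hstart, hdir⟩
    have hgx : ∀ x, g x = Λ.symm (gcBin n x) + Λ.symm c := by
      intro x
      have h1 : Λ (g x) = gcBin n x + c := by
        calc Λ (g x) = (Λ (g x) + c) + c := by rw [add_assoc, AGC.add_self, add_zero]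
          _ = gcBin n x + c := by rw [hT x]
      have h2 := congrArg Λ.symm h1
      rw [LinearEquiv.symm_apply_apply, map_add] at h2
      exact h2
    have hc : Λ.symm c = e := by
      have h3 := hgx (binN 2 n 0)
      rw [AGC.binN_zero_eq hn, AGC.gcBin_zero, map_zero, zero_add] at h3
      rw [← h3]
      rw [AGC.binN_zero_eq hn] at hstart
      exact hstart
    have hsum : ∀ x y, g x + g y = Λ.symm (gcBin n (x + y)) := by
      intro x y
      calc g x + g y
          = (Λ.symm (gcBin n x) + Λ.symm c) + (Λ.symm (gcBin n y) + Λ.symm c) := by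
            rw [← hgx, ← hgx]
        _ = (Λ.symm (gcBin n x) + Λ.symm (gcBin n y)) + (Λ.symm c + Λ.symm c) := by ring
        _ = Λ.symm (gcBin n x + gcBin n y) := by rw [AGC.add_self, add_zero, map_add]
        _ = Λ.symm (gcBin n (x + y)) := by rw [AGC.gcBin_add]
    have hτex : ∀ k : Fin n, ∃ j, Λ.symm (stdBasis 2 n k) = stdBasis 2 n j := by
      intro k
      have h1 := hgray ((2 ^ (k : ℕ) - 1 : ℕ) : ZMod (2 ^ n))
      rw [AGC.hd_one_iff] at h1
      obtain ⟨j, hj⟩ := h1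
      rw [hsum, AGC.binN_pow_sum hn, AGC.gcBin_vVec] at hj
      exact ⟨j, hj⟩
    choose τ hτ using hτex
    have hτinj : Function.Injective τ := by
      intro k k' hkk
      have h4 : Λ.symm (stdBasis 2 n k) = Λ.symm (stdBasis 2 n k') := by
        rw [hτ, hτ, hkk]
      exact AGC.stdBasis_injective (Λ.symm.injective h4)
    let σ : Equiv.Perm (Fin n) := Equiv.ofBijective τ (Finite.injective_iff_bijective.mp hτinj)
    have hσapp : ∀ k, σ k = τ k := fun k => rfl
    have hσa : σ ⟨n - 1, hlt⟩ = dIdx := by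
      have h5 : g (binN 2 n 0) + g (binN 2 n ((2 ^ n - 1 : ℕ) : ZMod (2 ^ n)))
          = stdBasis 2 n (τ ⟨n - 1, hlt⟩) := by
        rw [hsum, AGC.binN_zero_eq hn, zero_add, AGC.binN_top hn, AGC.gcBin_vVec, hτ]
      rw [hσapp]
      exact AGC.stdBasis_injective (h5.symm.trans hdir)
    refine ⟨⟨σ, hσa⟩, ?_⟩
    apply Subtype.ext
    funext x
    show AGC.permL n σ.symm (gcBin n x) + e = g x
    rw [hgx x, hc]
    congr 1
    have hdecomp := AGC.basis_decomp (gcBin n x)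
    rw [hdecomp, map_sum, map_sum]
    apply Finset.sum_congr rfl
    intro k _
    rw [map_smul, map_smul, AGC.permL_std, Equiv.symm_symm, hτ, hσapp]
end

section
/- Let p be an odd prime, n ≥ 1, and e ∈ 𝒞 a corner of 𝔽_p^n. An affine transformation T of 𝔽_p^n belongs to 𝒯_e if and only if T has the form T(x) = A(x − e) for all x, where A ∈ GL_n(𝔽_p) satisfies, for some permutation τ of {0,…,n−1}: Ae_i = −e_{τ(i)} for all i ∈ supp(e) and Ae_i = +e_{τ(i)} for all i ∈ supp(e^⊥). -/
/-- The vector `d = (-1,…,-1) ∈ 𝔽_p^n`. -/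
def dVec (p n : ℕ) : Fin n → ZMod p := fun _ => -1

/-- The opposite point `x^⊥ = d - x`. -/
def perp (p n : ℕ) (x : Fin n → ZMod p) : Fin n → ZMod p := dVec p n - x

/-- A corner of `𝔽_p^n`: all entries in `{0, -1}`. -/
def CornerVec (p n : ℕ) (x : Fin n → ZMod p) : Prop := ∀ i, x i = 0 ∨ x i = -1

/-- Membership in `𝒯_e`: affine bijections with `T(e) = 0`, `T(e^⊥) = d`,
mapping corners bijectively onto corners, and moving unit-vector differences to
signed unit-vector differences via a fixed coordinate permutation. -/
def MemT (p n : ℕ) (e : Fin n → ZMod p) (T : (Fin n → ZMod p) → (Fin n → ZMod p)) : Prop :=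
  (∃ (Λ : (Fin n → ZMod p) ≃ₗ[ZMod p] (Fin n → ZMod p)) (c : Fin n → ZMod p),
      ∀ x, T x = Λ x + c) ∧
  T e = 0 ∧
  T (perp p n e) = dVec p n ∧
  Set.BijOn T {x | CornerVec p n x} {x | CornerVec p n x} ∧
  ∃ τ : Equiv.Perm (Fin n), ∀ (i : Fin n) (x y : Fin n → ZMod p),
    x - y = stdBasis p n i →
      T x - T y = stdBasis p n (τ i) ∨ T x - T y = -stdBasis p n (τ i)

lemma pi_repr (p n : ℕ) (x : Fin n → ZMod p) :
    x = ∑ i, x i • stdBasis p n i := by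
  funext j
  simp [stdBasis, Finset.sum_apply, mul_ite, Finset.sum_ite_eq]

lemma apply_coord {p n : ℕ} (A : (Fin n → ZMod p) ≃ₗ[ZMod p] (Fin n → ZMod p))
    (τ : Equiv.Perm (Fin n)) (ε : Fin n → ZMod p)
    (hA : ∀ i, A (stdBasis p n i) = ε i • stdBasis p n (τ i))
    (x : Fin n → ZMod p) (j : Fin n) :
    A x (τ j) = ε j * x j := by
  nth_rewrite 1 [pi_repr p n x]
  rw [map_sum]
  simp only [map_smul, hA, Finset.sum_apply, Pi.smul_apply, stdBasis, smul_eq_mul,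
    Equiv.apply_eq_iff_eq, mul_ite, mul_one, mul_zero]
  rw [Finset.sum_ite_eq]
  simp [mul_comm]

/-- an affine transformation `T` of `𝔽_p^n` belongs to `𝒯_e` if and only if
`T(x) = A(x - e)` with `A ∈ GL_n(𝔽_p)` sending `e_i` to `-e_{τ(i)}` on `supp(e)` and to
`e_{τ(i)}` on `supp(e^⊥)`, for some permutation `τ`. -/
theorem memT_characterization (p n : ℕ) (hp : p.Prime) (hodd : Odd p) (hn : 1 ≤ n)
    (e : Fin n → ZMod p) (he : CornerVec p n e)
    (T : (Fin n → ZMod p) → (Fin n → ZMod p))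
    (hTaff : ∃ (Λ : (Fin n → ZMod p) ≃ₗ[ZMod p] (Fin n → ZMod p)) (c : Fin n → ZMod p),
      ∀ x, T x = Λ x + c) :
    MemT p n e T ↔
      ∃ (A : (Fin n → ZMod p) ≃ₗ[ZMod p] (Fin n → ZMod p)) (τ : Equiv.Perm (Fin n)),
        (∀ x, T x = A (x - e)) ∧
        (∀ i : Fin n,
          (e i = -1 → A (stdBasis p n i) = -stdBasis p n (τ i)) ∧
          (e i = 0 → A (stdBasis p n i) = stdBasis p n (τ i))) := by
  classical
  haveI : Fact p.Prime := ⟨hp⟩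
  have h01 : (0 : ZMod p) ≠ -1 := by
    intro h
    exact one_ne_zero (neg_eq_zero.mp h.symm)
  constructor
  · rintro ⟨⟨Λ, c, hΛ⟩, hTe, hTperp, _hbij, τ, hτ⟩
    have hc : c = -Λ e := by
      have h := hTe
      rw [hΛ] at h
      exact eq_neg_of_add_eq_zero_right h
    have hTx : ∀ x, T x = Λ (x - e) := by
      intro x
      rw [hΛ, hc, map_sub, sub_eq_add_neg]
    have hstep : ∀ i, Λ (stdBasis p n i) = stdBasis p n (τ i) ∨
        Λ (stdBasis p n i) = -stdBasis p n (τ i) := by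
      intro i
      have h := hτ i (stdBasis p n i) 0 (by simp)
      rw [hTx, hTx, ← map_sub] at h
      simpa using h
    have hsign : ∀ i, ∃ s : ZMod p, Λ (stdBasis p n i) = s • stdBasis p n (τ i) := by
      intro i
      rcases hstep i with h | h
      · exact ⟨1, by simpa using h⟩
      · exact ⟨-1, by simpa [neg_smul] using h⟩
    choose s hs using hsign
    have hperp : ∀ i, s i * ((perp p n e - e) i) = -1 := by
      intro i
      have h1 : Λ (perp p n e - e) = dVec p n := by
        rw [← hTx]; exact hTperp
      have h2 := apply_coord Λ τ s hs (perp p n e - e) i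
      rw [h1] at h2
      simpa [dVec] using h2.symm
    refine ⟨Λ, τ, hTx, fun i => ⟨?_, ?_⟩⟩
    · intro hei
      have h := hperp i
      have hval : (perp p n e - e) i = 1 := by
        simp [perp, dVec, hei]
      rw [hval, mul_one] at h
      rw [hs i, h, neg_one_smul]
    · intro hei
      have h := hperp i
      have hval : (perp p n e - e) i = -1 := by
        simp [perp, dVec, hei]
      rw [hval, mul_neg_one] at h
      have hs1 : s i = 1 := by
        have := neg_injective h
        simpa using this
      rw [hs i, hs1, one_smul]
  · rintro ⟨A, τ, hT, hA⟩
    set ε : Fin n → ZMod p := fun i => if e i = -1 then -1 else 1 with hε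
    have hε2 : ∀ i, ε i * ε i = 1 := by
      intro i; simp only [hε]; split <;> ring
    have hAe : ∀ i, A (stdBasis p n i) = ε i • stdBasis p n (τ i) := by
      intro i
      rcases he i with h | h
      · rw [(hA i).2 h]
        simp [hε, h, h01]
      · rw [(hA i).1 h]
        simp [hε, h]
    have hcoord : ∀ (x : Fin n → ZMod p) (j : Fin n), A x (τ j) = ε j * x j :=
      fun x j => apply_coord A τ ε hAe x j
    have hAsymm : ∀ i, A.symm (stdBasis p n i) = ε (τ.symm i) • stdBasis p n (τ.symm i) := by
      intro i
      have h : A (ε (τ.symm i) • stdBasis p n (τ.symm i)) = stdBasis p n i := by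
        rw [map_smul, hAe, smul_smul, hε2, one_smul, Equiv.apply_symm_apply]
      rw [← h, LinearEquiv.symm_apply_apply]
    have hcoord' : ∀ (y : Fin n → ZMod p) (j : Fin n),
        A.symm y (τ.symm j) = ε (τ.symm j) * y j :=
      fun y j => apply_coord A.symm τ.symm (fun i => ε (τ.symm i)) hAsymm y j
    refine ⟨⟨A, -(A e), fun x => by rw [hT, map_sub, sub_eq_add_neg]⟩, ?_, ?_, ?_, ?_⟩
    · rw [hT]; simp
    · funext k
      have h := hcoord (perp p n e - e) (τ.symm k)
      rw [Equiv.apply_symm_apply] at h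
      rw [hT, h]
      rcases he (τ.symm k) with h0 | h1
      · simp [hε, perp, dVec, h0, h01]
      · simp [hε, perp, dVec, h1]
    · have hmaps : Set.MapsTo T {x | CornerVec p n x} {x | CornerVec p n x} := by
        intro x hx k
        have h := hcoord (x - e) (τ.symm k)
        rw [Equiv.apply_symm_apply] at h
        rw [hT, h]
        rcases he (τ.symm k) with h0 | h1 <;> rcases hx (τ.symm k) with hx0 | hx1
        · left; simp [hε, h0, h01, hx0]
        · right; simp [hε, h0, h01, hx1]
        · right; simp [hε, h1, hx0]
        · left; simp [hε, h1, hx1]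
      have hinj : Function.Injective T := by
        intro a b hab
        rw [hT, hT] at hab
        have h := A.injective hab
        exact sub_left_injective h
      refine ⟨hmaps, hinj.injOn, ?_⟩
      intro y hy
      refine ⟨A.symm y + e, ?_, ?_⟩
      · intro j
        have h := hcoord' y (τ j)
        rw [Equiv.symm_apply_apply] at h
        show (A.symm y + e) j = 0 ∨ (A.symm y + e) j = -1
        rw [Pi.add_apply, h]
        rcases he j with h0 | h1 <;> rcases hy (τ j) with hy0 | hy1
        · left; simp [hε, h0, h01, hy0]
        · right; simp [hε, h0, h01, hy1]
        · right; simp [hε, h1, hy0]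
        · left; simp [hε, h1, hy1]
      · rw [hT]; simp
    · refine ⟨τ, fun i x y hxy => ?_⟩
      rw [hT, hT, ← map_sub]
      have h : x - e - (y - e) = stdBasis p n i := by
        rw [sub_sub_sub_cancel_right, hxy]
      rw [h, hAe]
      rcases he i with h0 | h1
      · left; simp [hε, h0, h01]
      · right; simp [hε, h1]
end

section
/- Let p be an odd prime and n ≥ 1. For every corner e ∈ 𝒞 of 𝔽_p^n, the set 𝒯_e has cardinality exactly n!. -/
/-- The sign attached to coordinate `i` by the corner `e`. -/
def sgn (p n : ℕ) (e : Fin n → ZMod p) (i : Fin n) : ZMod p :=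
  if e i = 0 then 1 else -1

lemma sgn_mul_self (p n : ℕ) (e : Fin n → ZMod p) (i : Fin n) :
    sgn p n e i * sgn p n e i = 1 := by
  unfold sgn; split <;> ring

/-- The signed-permutation linear equivalence associated to `τ` and `e`. -/
def Mlin (p n : ℕ) (e : Fin n → ZMod p) (τ : Equiv.Perm (Fin n)) :
    (Fin n → ZMod p) ≃ₗ[ZMod p] (Fin n → ZMod p) where
  toFun v := fun j => sgn p n e (τ.symm j) * v (τ.symm j)
  invFun v := fun i => sgn p n e i * v (τ i)
  left_inv v := by
    funext i
    simp only [Equiv.symm_apply_apply]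
    rw [← mul_assoc, sgn_mul_self, one_mul]
  right_inv v := by
    funext j
    simp only [Equiv.apply_symm_apply]
    rw [← mul_assoc, sgn_mul_self, one_mul]
  map_add' x y := by funext j; simp [mul_add]
  map_smul' c x := by
    funext j
    simp only [Pi.smul_apply, smul_eq_mul, RingHom.id_apply]
    ring

lemma Mlin_apply (p n : ℕ) (e : Fin n → ZMod p) (τ : Equiv.Perm (Fin n))
    (v : Fin n → ZMod p) (j : Fin n) :
    Mlin p n e τ v j = sgn p n e (τ.symm j) * v (τ.symm j) := rfl

lemma Mlin_stdBasis (p n : ℕ) (e : Fin n → ZMod p) (τ : Equiv.Perm (Fin n)) (i : Fin n) :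
    Mlin p n e τ (stdBasis p n i) = fun j => if j = τ i then sgn p n e i else 0 := by
  funext j
  rw [Mlin_apply]
  unfold stdBasis
  by_cases h : j = τ i
  · subst h; simp
  · have : τ.symm j ≠ i := fun hc => h (by rw [← hc, Equiv.apply_symm_apply])
    simp [this, h]

/-- The candidate transformation associated to `τ`. -/
def TT (p n : ℕ) (e : Fin n → ZMod p) (τ : Equiv.Perm (Fin n)) :
    (Fin n → ZMod p) → (Fin n → ZMod p) :=
  fun x => Mlin p n e τ (x - e)

lemma two_lt_p {p : ℕ} (hp : p.Prime) (hodd : Odd p) : 2 < p := by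
  rcases lt_or_eq_of_le hp.two_le with h | h
  · exact h
  · exfalso
    have : Even p := by rw [← h]; exact even_two
    exact (Nat.not_even_iff_odd.mpr hodd) this

lemma zmod_one_ne_neg_one {p : ℕ} (hp : p.Prime) (hodd : Odd p) : (1 : ZMod p) ≠ -1 := by
  haveI : Fact (2 < p) := ⟨two_lt_p hp hodd⟩
  exact fun h => ZMod.neg_one_ne_one h.symm

lemma zmod_one_ne_zero {p : ℕ} (hp : p.Prime) : (1 : ZMod p) ≠ 0 := by
  haveI : Fact (1 < p) := ⟨hp.one_lt⟩
  exact one_ne_zero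

lemma zmod_neg_one_ne_zero {p : ℕ} (hp : p.Prime) : (-1 : ZMod p) ≠ 0 := by
  intro h
  exact zmod_one_ne_zero hp (by rw [← neg_neg (1 : ZMod p), h, neg_zero])

lemma sgn_ne_zero {p n : ℕ} (hp : p.Prime) (e : Fin n → ZMod p) (i : Fin n) :
    sgn p n e i ≠ 0 := by
  unfold sgn
  split
  · exact zmod_one_ne_zero hp
  · exact zmod_neg_one_ne_zero hp

lemma sgn_eq_one {p n : ℕ} {e : Fin n → ZMod p} {i : Fin n} (h : e i = 0) :
    sgn p n e i = 1 := if_pos h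

lemma sgn_eq_neg_one {p n : ℕ} (hp : p.Prime) {e : Fin n → ZMod p} {i : Fin n}
    (h : e i = -1) : sgn p n e i = -1 :=
  if_neg (fun h0 => zmod_neg_one_ne_zero hp (h ▸ h0))

lemma memT_TT (p n : ℕ) (hp : p.Prime) (hodd : Odd p)
    (e : Fin n → ZMod p) (he : CornerVec p n e) (τ : Equiv.Perm (Fin n)) :
    MemT p n e (TT p n e τ) := by
  refine ⟨⟨Mlin p n e τ, -(Mlin p n e τ e), fun x => ?_⟩, ?_, ?_, ⟨?_, ?_, ?_⟩, τ, ?_⟩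
  · show Mlin p n e τ (x - e) = _
    rw [map_sub]; ring
  · show Mlin p n e τ (e - e) = 0
    rw [sub_self, map_zero]
  · funext j
    show sgn p n e (τ.symm j) * (perp p n e (τ.symm j) - e (τ.symm j)) = -1
    set i := τ.symm j
    have hperp : perp p n e i - e i = -1 - 2 * e i := by
      unfold perp dVec; simp only [Pi.sub_apply]; ring
    rcases he i with h | h
    · rw [hperp, h, sgn_eq_one h]; ring
    · rw [hperp, h, sgn_eq_neg_one hp h]; ring
  · -- MapsTo
    intro x hx j
    show sgn p n e (τ.symm j) * (x (τ.symm j) - e (τ.symm j)) = 0 ∨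
      sgn p n e (τ.symm j) * (x (τ.symm j) - e (τ.symm j)) = -1
    set i := τ.symm j
    rcases he i with h | h
    · rw [sgn_eq_one h, one_mul, h, sub_zero]; exact hx i
    · rw [sgn_eq_neg_one hp h, h]
      rcases hx i with h' | h'
      · right; rw [h']; ring
      · left; rw [h']; ring
  · -- InjOn
    intro x _ y _ hxy
    have h2 : Mlin p n e τ (x - e) = Mlin p n e τ (y - e) := hxy
    have h3 := (Mlin p n e τ).injective h2
    exact sub_left_injective h3
  · -- SurjOn
    intro y hy
    refine ⟨(Mlin p n e τ).symm y + e, ?_, ?_⟩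
    · intro i
      show sgn p n e i * y (τ i) + e i = 0 ∨ sgn p n e i * y (τ i) + e i = -1
      rcases he i with h | h
      · rw [sgn_eq_one h, one_mul, h, add_zero]; exact hy (τ i)
      · rw [sgn_eq_neg_one hp h, h]
        rcases hy (τ i) with h' | h'
        · right; rw [h']; ring
        · left; rw [h']; ring
    · show Mlin p n e τ ((Mlin p n e τ).symm y + e - e) = y
      rw [add_sub_cancel_right, LinearEquiv.apply_symm_apply]
  · -- difference condition
    intro i x y hxy
    have hd : TT p n e τ x - TT p n e τ y = Mlin p n e τ (x - y) := by
      show Mlin p n e τ (x - e) - Mlin p n e τ (y - e) = _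
      rw [← map_sub]
      congr 1
      abel
    rw [hd, hxy, Mlin_stdBasis]
    rcases he i with h | h
    · left; funext j; unfold stdBasis; rw [sgn_eq_one h]
    · right
      funext j
      show (if j = τ i then sgn p n e i else 0) = -(stdBasis p n (τ i) j)
      unfold stdBasis
      rw [sgn_eq_neg_one hp h]
      split <;> simp

lemma TT_injective (p n : ℕ) (hp : p.Prime) (e : Fin n → ZMod p) :
    Function.Injective (TT p n e) := by
  intro τ τ' h
  apply Equiv.ext
  intro i
  have hx : TT p n e τ (e + stdBasis p n i) = TT p n e τ' (e + stdBasis p n i) := by rw [h]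
  rw [TT, TT, add_sub_cancel_left, Mlin_stdBasis, Mlin_stdBasis] at hx
  have := congrFun hx (τ i)
  simp only [if_pos rfl] at this
  by_contra hne
  rw [if_neg (fun hc : (τ i : Fin n) = τ' i => hne hc)] at this
  exact sgn_ne_zero hp e i this

lemma TT_surjective (p n : ℕ) (hp : p.Prime) (hodd : Odd p)
    (e : Fin n → ZMod p) (he : CornerVec p n e)
    (T : (Fin n → ZMod p) → (Fin n → ZMod p)) (hT : MemT p n e T) :
    ∃ τ : Equiv.Perm (Fin n), TT p n e τ = T := by
  have h1 : (1 : ZMod p) ≠ 0 := zmod_one_ne_zero hp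
  have h1n : (1 : ZMod p) ≠ -1 := zmod_one_ne_neg_one hp hodd
  obtain ⟨⟨Λ, c, hΛ⟩, hTe, hTperp, hbij, τ, hτ⟩ := hT
  refine ⟨τ, ?_⟩
  -- T x = Λ (x - e)
  have hc : ∀ x, T x = Λ (x - e) := by
    intro x
    have h0 : (0 : Fin n → ZMod p) = Λ e + c := by rw [← hΛ e, hTe]
    have : c = -(Λ e) := by
      have := h0.symm
      linear_combination (norm := module) this
    rw [hΛ x, this, map_sub]
    abel
  -- differences
  have hdiff : ∀ x y : Fin n → ZMod p, T x - T y = Λ (x - y) := by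
    intro x y
    rw [hc x, hc y, ← map_sub]
    congr 1
    abel
  -- Λ on basis vectors
  have hbasis : ∀ i, Λ (stdBasis p n i) = Mlin p n e τ (stdBasis p n i) := by
    intro i
    have hst : (e + stdBasis p n i) - e = stdBasis p n i := by abel
    have key := hτ i (e + stdBasis p n i) e hst
    rw [hdiff, hst] at key
    rw [Mlin_stdBasis]
    rcases he i with h0 | hm
    · -- e i = 0 : sgn = 1, claim Λ e_i = e_{τ i}
      have hsgn : sgn p n e i = 1 := by unfold sgn; rw [if_pos h0]
      rcases key with hk | hk
      · rw [hk]; funext j; unfold stdBasis; rw [hsgn]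
      · -- then T (e - e_i) = e_{τ i}, not a corner: contradiction
        exfalso
        have hcor : CornerVec p n (e - stdBasis p n i) := by
          intro k
          unfold stdBasis
          simp only [Pi.sub_apply]
          by_cases hk' : k = i
          · subst hk'; rw [h0]; right; simp
          · simp only [if_neg hk', sub_zero]; exact he k
        have himg : CornerVec p n (T (e - stdBasis p n i)) :=
          hbij.mapsTo hcor
        have hval : T (e - stdBasis p n i) = stdBasis p n (τ i) := by
          rw [hc, sub_right_comm, sub_self, zero_sub, map_neg]
          have : Λ (stdBasis p n i) = -stdBasis p n (τ i) := hk
          rw [this, neg_neg]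
        rcases himg (τ i) with hv | hv <;> rw [hval] at hv <;>
          unfold stdBasis at hv <;> simp at hv
        · exact h1 hv
        · exact h1n hv
    · -- e i = -1 : sgn = -1, claim Λ e_i = -e_{τ i}
      have hsgn : sgn p n e i = -1 := by
        unfold sgn
        rw [if_neg]
        intro h
        exact h1 (by rw [← neg_neg (1 : ZMod p), ← hm, h, neg_zero])
      rcases key with hk | hk
      · -- then T (e + e_i) = e_{τ i}, not a corner: contradiction
        exfalso
        have hcor : CornerVec p n (e + stdBasis p n i) := by
          intro k
          unfold stdBasis
          simp only [Pi.add_apply]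
          by_cases hk' : k = i
          · subst hk'; rw [hm]; left; simp
          · simp only [if_neg hk', add_zero]; exact he k
        have himg : CornerVec p n (T (e + stdBasis p n i)) :=
          hbij.mapsTo hcor
        have hval : T (e + stdBasis p n i) = stdBasis p n (τ i) := by
          rw [hc, add_sub_cancel_left, hk]
        rcases himg (τ i) with hv | hv <;> rw [hval] at hv <;>
          unfold stdBasis at hv <;> simp at hv
        · exact h1 hv
        · exact h1n hv
      · rw [hk]
        funext j
        show -(stdBasis p n (τ i) j) = _
        unfold stdBasis
        rw [hsgn]
        by_cases hj : j = τ i <;> simp [hj]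
  -- conclude Λ = Mlin as linear maps
  have hΛeq : (Λ : (Fin n → ZMod p) →ₗ[ZMod p] (Fin n → ZMod p)) =
      (Mlin p n e τ : (Fin n → ZMod p) →ₗ[ZMod p] (Fin n → ZMod p)) := by
    apply Module.Basis.ext (Pi.basisFun (ZMod p) (Fin n))
    intro i
    have hb : (Pi.basisFun (ZMod p) (Fin n)) i = stdBasis p n i := by
      rw [Pi.basisFun_apply]
      funext j
      rw [Pi.single_apply]
      rfl
    rw [hb]
    exact hbasis i
  funext x
  have h5 := LinearMap.congr_fun hΛeq (x - e)
  rw [hc x]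
  exact h5.symm

/-- `|𝒯_e| = n!` for every corner `e` of `𝔽_p^n`. -/
theorem card_memT (p n : ℕ) (hp : p.Prime) (hodd : Odd p) (hn : 1 ≤ n)
    (e : Fin n → ZMod p) (he : CornerVec p n e) :
    Nat.card {T : (Fin n → ZMod p) → (Fin n → ZMod p) // MemT p n e T} = n.factorial := by
  have hbij : Function.Bijective
      (fun τ : Equiv.Perm (Fin n) =>
        (⟨TT p n e τ, memT_TT p n hp hodd e he τ⟩ :
          {T : (Fin n → ZMod p) → (Fin n → ZMod p) // MemT p n e T})) := by
    constructor
    · intro τ τ' h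
      exact TT_injective p n hp e (congrArg Subtype.val h)
    · rintro ⟨T, hT⟩
      obtain ⟨τ, hτ⟩ := TT_surjective p n hp hodd e he T hT
      exact ⟨τ, Subtype.ext hτ⟩
  have := Nat.card_eq_of_bijective _ hbij
  rw [← this, Nat.card_eq_fintype_card, Fintype.card_perm, Fintype.card_fin]
end

section
/- Let p be an odd prime, n ≥ 1, e ∈ 𝒞 a corner of 𝔽_p^n, and T ∈ 𝒯_e with associated permutation τ. Let e^τ denote the corner with (e^τ)_{τ(i)} = e_i for all i. Then the inverse transformation satisfies T^{-1} ∈ 𝒯_{e^τ}. -/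
/-! `T x = A (x - e)` with `A` a signed permutation matrix, so `T⁻¹ y = A⁻¹ y + e`, and `A⁻¹` is the
signed permutation for `τ⁻¹` with the same signs. Coordinatewise, `A e = -e^τ` and
`A e^⊥ = (e^τ)^⊥` because the entries of a corner are `0` or `-1`; these give `T⁻¹ e^τ = 0` and
`T⁻¹ (e^τ)^⊥ = d`, while bijectivity on corners passes to the inverse. -/

theorem stdBasis_eq_single (p n : ℕ) (i : Fin n) : stdBasis p n i = Pi.single i 1 := by
  funext j
  simp [stdBasis, Pi.single_apply]

theorem LinearMap.apply_eq_of_apply_single_eq_smul_single {R ι : Type*} [CommRing R] [Fintype ι]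
    [DecidableEq ι] (f : (ι → R) →ₗ[R] ι → R) (τ : Equiv.Perm ι) (s : ι → R)
    (hf : ∀ i, f (Pi.single i 1) = s i • Pi.single (τ i) 1) (x : ι → R) (j : ι) :
    f x j = s (τ⁻¹ j) * x (τ⁻¹ j) := by
  have hsum : f x = ∑ i, x i • f (Pi.single i 1) := by
    conv_lhs => rw [← Finset.univ_sum_single x]
    refine (map_sum f _ _).trans (Finset.sum_congr rfl fun i _ => ?_)
    rw [← map_smul, ← Pi.single_smul', smul_eq_mul, mul_one]
  rw [hsum, Finset.sum_apply, Finset.sum_eq_single (τ⁻¹ j)]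
  · simp [hf, mul_comm]
  · intro i _ hi
    have : τ i ≠ j := fun h => hi (by simp [← h])
    simp [hf, this]
  · simp

theorem eq_symm_add_of_leftInverse {R M : Type*} [Semiring R] [AddCommGroup M] [Module R M]
    {T Tinv : M → M} (A : M ≃ₗ[R] M) (e : M) (hA : ∀ x, T x = A (x - e))
    (hTinv : Function.LeftInverse Tinv T) (y : M) : Tinv y = A.symm y + e := by
  simpa [hA] using hTinv (A.symm y + e)

section SignedPermutation

variable {p n : ℕ} {e : Fin n → ZMod p} {A : (Fin n → ZMod p) ≃ₗ[ZMod p] (Fin n → ZMod p)}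
  {τ : Equiv.Perm (Fin n)}

def IsSignedPermOfCorner (e : Fin n → ZMod p) (A : (Fin n → ZMod p) ≃ₗ[ZMod p] (Fin n → ZMod p))
    (τ : Equiv.Perm (Fin n)) : Prop :=
  ∀ i : Fin n,
    (e i = -1 → A (stdBasis p n i) = -stdBasis p n (τ i)) ∧
    (e i = 0 → A (stdBasis p n i) = stdBasis p n (τ i))

theorem apply_eq_sign_mul_of_corner (he : CornerVec p n e) (hτ : IsSignedPermOfCorner e A τ)
    (x : Fin n → ZMod p) (j : Fin n) :
    A x j = (if e (τ⁻¹ j) = -1 then -1 else 1) * x (τ⁻¹ j) := by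
  refine LinearMap.apply_eq_of_apply_single_eq_smul_single A.toLinearMap τ
    (fun i => if e i = -1 then -1 else 1) (fun i => ?_) x j
  simp only [LinearEquiv.coe_coe, ← stdBasis_eq_single]
  by_cases h : e i = -1
  · simp [h, (hτ i).1 h]
  · simp [h, (hτ i).2 ((he i).resolve_right h)]

theorem apply_corner_eq_neg (he : CornerVec p n e) (hτ : IsSignedPermOfCorner e A τ) :
    A e = -fun j => e (τ⁻¹ j) := by
  funext j
  obtain ⟨i, rfl⟩ := τ.surjective j
  rw [apply_eq_sign_mul_of_corner he hτ, Equiv.Perm.coe_inv, Equiv.symm_apply_apply]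
  by_cases h : e i = -1
  · simp [h]
  · simp [(he i).resolve_right h]

theorem apply_perp_eq_perp (he : CornerVec p n e) (hτ : IsSignedPermOfCorner e A τ) :
    A (perp p n e) = perp p n fun j => e (τ⁻¹ j) := by
  funext j
  obtain ⟨i, rfl⟩ := τ.surjective j
  rw [apply_eq_sign_mul_of_corner he hτ, Equiv.Perm.coe_inv, Equiv.symm_apply_apply]
  by_cases h : e i = -1
  · simp [h, perp, dVec]
  · -- in `ZMod 1` also `0 = -1`, so the branch is fixed before substituting `e i = 0`
    rw [if_neg h]
    simp [(he i).resolve_right h, perp, dVec]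

theorem symm_stdBasis_eq_or_eq_neg (he : CornerVec p n e) (hτ : IsSignedPermOfCorner e A τ)
    (i : Fin n) :
    A.symm (stdBasis p n i) = stdBasis p n (τ⁻¹ i) ∨
      A.symm (stdBasis p n i) = -stdBasis p n (τ⁻¹ i) := by
  obtain ⟨j, rfl⟩ := τ.surjective i
  simp only [Equiv.Perm.coe_inv, Equiv.symm_apply_apply]
  rcases he j with h | h
  · exact .inl (A.symm_apply_eq.mpr ((hτ j).2 h).symm)
  · exact .inr (A.symm_apply_eq.mpr (by rw [map_neg, (hτ j).1 h, neg_neg]))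

end SignedPermutation

theorem memT_inverse_general (p n : ℕ)
    (e : Fin n → ZMod p) (he : CornerVec p n e)
    (T Tinv : (Fin n → ZMod p) → (Fin n → ZMod p)) (hT : MemT p n e T)
    (A : (Fin n → ZMod p) ≃ₗ[ZMod p] (Fin n → ZMod p)) (τ : Equiv.Perm (Fin n))
    (hA : ∀ x, T x = A (x - e))
    (hτ : ∀ i : Fin n,
      (e i = -1 → A (stdBasis p n i) = -stdBasis p n (τ i)) ∧
      (e i = 0 → A (stdBasis p n i) = stdBasis p n (τ i)))
    (hTinv₁ : Function.LeftInverse Tinv T) (hTinv₂ : Function.RightInverse Tinv T) :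
    MemT p n (fun j => e (τ⁻¹ j)) Tinv := by
  obtain ⟨-, -, -, hcorners, -⟩ := hT
  have hTinv := eq_symm_add_of_leftInverse A e hA hTinv₁
  refine ⟨⟨A.symm, e, hTinv⟩, ?_, ?_, hcorners.symm ⟨fun x _ => hTinv₂ x, fun x _ => hTinv₁ x⟩,
    τ⁻¹, fun i x y hxy => ?_⟩
  · rw [hTinv, A.symm_apply_eq.mpr (by rw [map_neg, apply_corner_eq_neg he hτ, neg_neg]),
      neg_add_cancel]
  · rw [hTinv, ← apply_perp_eq_perp he hτ, A.symm_apply_apply, perp, sub_add_cancel]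
  · rw [hTinv, hTinv, add_sub_add_right_eq_sub, ← map_sub, hxy]
    exact symm_stdBasis_eq_or_eq_neg he hτ i

/-- if `T ∈ 𝒯_e` has associated permutation `τ`, then `T⁻¹ ∈ 𝒯_{e^τ}`,
where `(e^τ)_{τ(i)} = e_i`, i.e. `e^τ = e ∘ τ⁻¹`. -/
theorem memT_inverse (p n : ℕ) (hp : p.Prime) (hodd : Odd p) (hn : 1 ≤ n)
    (e : Fin n → ZMod p) (he : CornerVec p n e)
    (T Tinv : (Fin n → ZMod p) → (Fin n → ZMod p)) (hT : MemT p n e T)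
    (A : (Fin n → ZMod p) ≃ₗ[ZMod p] (Fin n → ZMod p)) (τ : Equiv.Perm (Fin n))
    (hA : ∀ x, T x = A (x - e))
    (hτ : ∀ i : Fin n,
      (e i = -1 → A (stdBasis p n i) = -stdBasis p n (τ i)) ∧
      (e i = 0 → A (stdBasis p n i) = stdBasis p n (τ i)))
    (hTinv₁ : Function.LeftInverse Tinv T) (hTinv₂ : Function.RightInverse Tinv T) :
    MemT p n (fun j => e (τ⁻¹ j)) Tinv :=
  memT_inverse_general p n e he T Tinv hT A τ hA hτ hTinv₁ hTinv₂
end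

section
/- Let p be a prime, n ≥ 1, and i ∈ {0,…,p^n − 2}. Let g(i) be the number of trailing (p−1)-digits of bin_n(i), i.e. the largest k with (bin_n(i))_ν = p−1 for all ν < k. Then consecutive Gray codewords differ by plus or minus a standard unit vector in exactly that coordinate: gc_n(bin_n(i+1)) − gc_n(bin_n(i)) = ε · e_{g(i)} for some ε ∈ {1, −1}. -/
/-- The p-adic reflected Gray code `gc_n`, defined recursively: the top digit is kept,
and the lower digits are Gray-coded, reflected (`x' ↦ x'^⊥`) iff the top digit is odd. -/
def grayCode (p : ℕ) : (n : ℕ) → (Fin n → ZMod p) → (Fin n → ZMod p)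
  | 0, x => x
  | n + 1, x =>
    Fin.snoc
      (if (x (Fin.last n)).val % 2 = 0
        then grayCode p n (Fin.init x)
        else grayCode p n (perp p n (Fin.init x)))
      (x (Fin.last n))

theorem Nat.mul_sub_one_sub_div {P Q r : ℕ} (hr : r < P * Q) :
    (P * Q - 1 - r) / Q = P - 1 - r / Q := by
  obtain ⟨c, rfl⟩ := Nat.exists_eq_add_of_lt (Nat.div_lt_of_lt_mul (mul_comm P Q ▸ hr))
  have hQ : r % Q < Q := Nat.mod_lt _ (Nat.pos_of_ne_zero (by rintro rfl; simp at hr))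
  have hr' := Nat.div_add_mod' r Q
  rw [show r / Q + c + 1 - 1 - r / Q = c by omega]
  apply Nat.div_eq_of_lt_le <;> simp only [add_mul, one_mul] at hr ⊢ <;> omega

theorem Nat.pow_succ_dvd_succ_iff {p k i : ℕ} (h : p ^ k ∣ i + 1) :
    p ^ (k + 1) ∣ i + 1 ↔ p ∣ i / p ^ k + 1 := by
  rw [← Nat.succ_div_of_dvd h, Nat.dvd_div_iff_mul_dvd h, pow_succ]

theorem Nat.pow_dvd_succ_iff {p i : ℕ} (k : ℕ) : p ^ k ∣ i + 1 ↔ ∀ ν < k, p ∣ i / p ^ ν + 1 := by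
  induction k with
  | zero => simp
  | succ k ih =>
    rw [Nat.forall_lt_succ_right, ← ih]
    constructor
    · intro h
      have hk := (pow_dvd_pow p k.le_succ).trans h
      exact ⟨hk, (Nat.pow_succ_dvd_succ_iff hk).mp h⟩
    · rintro ⟨hk, h⟩
      exact (Nat.pow_succ_dvd_succ_iff hk).mpr h

theorem Fin.snoc_sub_snoc {α : Type*} [Sub α] {m : ℕ} (a b : Fin m → α) (c d : α) :
    (Fin.snoc a c : Fin (m + 1) → α) - Fin.snoc b d = Fin.snoc (a - b) (c - d) := by
  funext j
  induction j using Fin.lastCases <;> simp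

/-- `bin_n` on natural numbers; each digit is reduced mod `p` only by the cast. -/
def digitsVec (p n i : ℕ) : Fin n → ZMod p := fun ν => ((i / p ^ (ν : ℕ) : ℕ) : ZMod p)

theorem binN_eq_digitsVec (p n : ℕ) (a : ZMod (p ^ n)) : binN p n a = digitsVec p n a.val :=
  funext fun _ => ZMod.natCast_mod _ _

theorem digitsVec_eq_neg_one_iff (p n i : ℕ) (ν : Fin n) :
    digitsVec p n i ν = -1 ↔ p ∣ i / p ^ (ν : ℕ) + 1 := by
  rw [digitsVec, eq_neg_iff_add_eq_zero, ← Nat.cast_add_one, ZMod.natCast_eq_zero_iff]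

theorem digitsVec_mul_add {p m r : ℕ} (hp : 0 < p) (q : ℕ) (hr : r < p ^ m) :
    digitsVec p (m + 1) (p ^ m * q + r) = Fin.snoc (digitsVec p m r) (q : ZMod p) := by
  funext ν
  induction ν using Fin.lastCases with
  | last =>
    simp only [digitsVec, Fin.snoc_last, Fin.val_last]
    rw [Nat.mul_add_div (pow_pos hp m), Nat.div_eq_of_lt hr, add_zero]
  | cast ν =>
    simp only [digitsVec, Fin.snoc_castSucc, Fin.val_castSucc]
    have hν : p ^ m = p ^ (ν : ℕ) * p ^ (m - ν) := by rw [← pow_add, Nat.add_sub_cancel' ν.is_lt.le]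
    have htop : ((p ^ (m - ν) : ℕ) : ZMod p) = 0 :=
      (ZMod.natCast_eq_zero_iff _ _).mpr (dvd_pow_self p (Nat.sub_ne_zero_of_lt ν.is_lt))
    rw [hν, mul_assoc, Nat.mul_add_div (pow_pos hp _), Nat.cast_add, Nat.cast_mul, htop, zero_mul,
      zero_add]

theorem perp_digitsVec {p m r : ℕ} (hr : r < p ^ m) :
    perp p m (digitsVec p m r) = digitsVec p m (p ^ m - 1 - r) := by
  funext ν
  have hν : p ^ m = p ^ (m - ν) * p ^ (ν : ℕ) := by rw [← pow_add, Nat.sub_add_cancel ν.is_lt.le]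
  have htop : ((p ^ (m - ν) : ℕ) : ZMod p) = 0 :=
    (ZMod.natCast_eq_zero_iff _ _).mpr (dvd_pow_self p (Nat.sub_ne_zero_of_lt ν.is_lt))
  have hlt : r / p ^ (ν : ℕ) < p ^ (m - ν) := Nat.div_lt_of_lt_mul (by rwa [mul_comm, ← hν])
  simp only [perp, dVec, digitsVec, Pi.sub_apply]
  rw [hν, Nat.mul_sub_one_sub_div (hν ▸ hr), Nat.sub_sub, Nat.cast_sub (by omega), htop]
  push_cast
  ring

theorem smul_stdBasis_castSucc {p m : ℕ} (ε : ZMod p) (k : Fin m) :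
    ε • stdBasis p (m + 1) k.castSucc = Fin.snoc (ε • stdBasis p m k) 0 := by
  funext j
  induction j using Fin.lastCases <;> simp [stdBasis, Fin.ext_iff, k.is_lt.ne']

theorem stdBasis_last (p m : ℕ) : stdBasis p (m + 1) (Fin.last m) = Fin.snoc 0 1 := by
  funext j
  induction j using Fin.lastCases <;> simp [stdBasis, Fin.ext_iff, (Fin.is_lt _).ne]

theorem grayCode_digitsVec_mul_add {p m q r : ℕ} (hq : q < p) (hr : r < p ^ m) :
    grayCode p (m + 1) (digitsVec p (m + 1) (p ^ m * q + r)) =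
      Fin.snoc (grayCode p m (digitsVec p m (if q % 2 = 0 then r else p ^ m - 1 - r)))
        (q : ZMod p) := by
  rw [digitsVec_mul_add (by omega) q hr, grayCode, Fin.init_snoc, Fin.snoc_last,
    ZMod.val_natCast_of_lt hq]
  split_ifs <;> simp only [perp_digitsVec hr]

theorem grayCode_digitsVec_carry {p m q : ℕ} (hq : q + 1 < p) :
    grayCode p (m + 1) (digitsVec p (m + 1) (p ^ m * (q + 1) + 0)) -
        grayCode p (m + 1) (digitsVec p (m + 1) (p ^ m * q + (p ^ m - 1))) =
      stdBasis p (m + 1) (Fin.last m) := by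
  have hpm : 0 < p ^ m := pow_pos (by omega) m
  rw [grayCode_digitsVec_mul_add hq hpm, grayCode_digitsVec_mul_add (by omega) (by omega),
    Fin.snoc_sub_snoc, stdBasis_last, Nat.cast_succ, add_sub_cancel_left]
  congr 1
  rw [sub_eq_zero]
  congr 2
  split_ifs <;> omega

theorem grayCode_digitsVec_succ_sub {p : ℕ} (hp : 0 < p) {n : ℕ} (i : ℕ) (k : Fin n)
    (hi : i + 1 < p ^ n) (hk : p ^ (k : ℕ) ∣ i + 1) (hk' : ¬ p ^ ((k : ℕ) + 1) ∣ i + 1) :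
    ∃ ε : ZMod p, (ε = 1 ∨ ε = -1) ∧
      grayCode p n (digitsVec p n (i + 1)) - grayCode p n (digitsVec p n i) =
        ε • stdBasis p n k := by
  induction n generalizing i with
  | zero => exact k.elim0
  | succ m ih =>
  obtain ⟨q, r, hr, hq, rfl⟩ : ∃ q r, r < p ^ m ∧ q < p ∧ i = p ^ m * q + r :=
    ⟨i / p ^ m, i % p ^ m, Nat.mod_lt _ (pow_pos hp m),
      Nat.div_lt_of_lt_mul (by rw [← pow_succ]; omega), (Nat.div_add_mod i _).symm⟩
  rw [add_assoc] at hi hk hk' ⊢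
  have hdvd_iff {d : ℕ} (hd : d ∣ p ^ m) : d ∣ p ^ m * q + (r + 1) ↔ d ∣ r + 1 :=
    Nat.dvd_add_right (hd.mul_right q)
  induction k using Fin.lastCases with
  | last =>
    have hr1 : r + 1 = p ^ m :=
      le_antisymm hr (Nat.le_of_dvd (Nat.succ_pos _) ((hdvd_iff dvd_rfl).mp (by simpa using hk)))
    have hi' : p ^ m * q + (r + 1) = p ^ m * (q + 1) + 0 := by rw [hr1]; ring
    have hq1 : q + 1 < p := Nat.lt_of_mul_lt_mul_left (a := p ^ m) (by rw [← pow_succ]; omega)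
    obtain rfl : r = p ^ m - 1 := by omega
    exact ⟨1, Or.inl rfl, by rw [one_smul, hi', grayCode_digitsVec_carry hq1]⟩
  | cast k =>
    have hdk : p ^ ((k : ℕ) + 1) ∣ p ^ m := pow_dvd_pow p k.is_lt
    have hdk' : p ^ (k : ℕ) ∣ p ^ m := pow_dvd_pow p k.is_lt.le
    rw [Fin.val_castSucc, hdvd_iff hdk'] at hk
    rw [Fin.val_castSucc, hdvd_iff hdk] at hk'
    have hr1 : r + 1 < p ^ m := lt_of_le_of_ne hr fun h => hk' (h ▸ hdk)
    rw [grayCode_digitsVec_mul_add hq hr1, grayCode_digitsVec_mul_add hq hr, Fin.snoc_sub_snoc,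
      sub_self]
    simp_rw [smul_stdBasis_castSucc]
    refine Exists.imp (fun ε => And.imp_right (congrArg fun v : Fin m → ZMod p =>
      (Fin.snoc v 0 : Fin (m + 1) → ZMod p))) ?_
    split_ifs
    · exact ih r k hr1 hk hk'
    · have hsub {d : ℕ} (hd : d ∣ p ^ m) : d ∣ p ^ m - 1 - (r + 1) + 1 ↔ d ∣ r + 1 := by
        rw [show p ^ m - 1 - (r + 1) + 1 = p ^ m - (r + 1) by omega]
        exact Nat.dvd_sub_iff_right hr1.le hd
      obtain ⟨ε, hε, h⟩ :=
        ih (p ^ m - 1 - (r + 1)) k (by omega) ((hsub hdk').mpr hk) (mt (hsub hdk).mp hk')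
      refine ⟨-ε, by rcases hε with rfl | rfl <;> simp, ?_⟩
      rw [show p ^ m - 1 - r = p ^ m - 1 - (r + 1) + 1 by omega, neg_smul, ← h, neg_sub]

theorem grayCode_consecutive_diff_general (p n : ℕ)
    (i : ℕ) (hi : i + 1 < p ^ n) (k : ℕ) (hk : k < n)
    (htrail : ∀ ν : Fin n, (ν : ℕ) < k → binN p n (i : ZMod (p ^ n)) ν = -1)
    (hstop : binN p n (i : ZMod (p ^ n)) ⟨k, hk⟩ ≠ -1) :
    ∃ ε : ZMod p, (ε = 1 ∨ ε = -1) ∧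
      grayCode p n (binN p n ((i + 1 : ℕ) : ZMod (p ^ n))) -
        grayCode p n (binN p n (i : ZMod (p ^ n))) = ε • stdBasis p n ⟨k, hk⟩ := by
  have hp : 0 < p := Nat.pos_of_ne_zero fun hp => by simp [hp, Nat.ne_zero_of_lt hk] at hi
  have hbin {j : ℕ} (hj : j < p ^ n) : binN p n (j : ZMod (p ^ n)) = digitsVec p n j := by
    rw [binN_eq_digitsVec, ZMod.val_natCast_of_lt hj]
  rw [hbin (by omega)] at htrail hstop
  rw [hbin hi, hbin (by omega)]
  have hdvd : p ^ k ∣ i + 1 := (Nat.pow_dvd_succ_iff k).mpr fun ν hν =>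
    (digitsVec_eq_neg_one_iff p n i ⟨ν, by omega⟩).mp (htrail ⟨ν, by omega⟩ hν)
  refine grayCode_digitsVec_succ_sub hp i ⟨k, hk⟩ hi hdvd ?_
  rw [Nat.pow_succ_dvd_succ_iff hdvd]
  exact mt (digitsVec_eq_neg_one_iff p n i ⟨k, hk⟩).mpr hstop

/-- consecutive p-adic Gray codewords differ by plus or minus the standard
unit vector at coordinate `g(i)`, the number of trailing `(p-1)`-digits of `bin_n(i)`. -/
theorem grayCode_consecutive_diff (p n : ℕ) (hp : p.Prime) (hn : 1 ≤ n)
    (i : ℕ) (hi : i + 1 < p ^ n) (k : ℕ) (hk : k < n)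
    (htrail : ∀ ν : Fin n, (ν : ℕ) < k → binN p n (i : ZMod (p ^ n)) ν = -1)
    (hstop : binN p n (i : ZMod (p ^ n)) ⟨k, hk⟩ ≠ -1) :
    ∃ ε : ZMod p, (ε = 1 ∨ ε = -1) ∧
      grayCode p n (binN p n ((i + 1 : ℕ) : ZMod (p ^ n))) -
        grayCode p n (binN p n (i : ZMod (p ^ n))) = ε • stdBasis p n ⟨k, hk⟩ :=
  grayCode_consecutive_diff_general p n i hi k hk htrail hstop
end

section
/- Let p be an odd prime and n ≥ 1. The p-adic reflected Gray code commutes with taking opposites: gc_n(x)^⊥ = gc_n(x^⊥) for all x ∈ 𝔽_p^n. -/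
lemma perp_apply (p n : ℕ) (x : Fin n → ZMod p) (i : Fin n) :
    perp p n x i = -1 - x i := rfl

lemma perp_perp (p n : ℕ) (x : Fin n → ZMod p) : perp p n (perp p n x) = x := by
  funext i
  simp [perp_apply]

lemma init_perp (p n : ℕ) (x : Fin (n + 1) → ZMod p) :
    Fin.init (perp p (n + 1) x) = perp p n (Fin.init x) := by
  funext i
  simp [Fin.init, perp_apply]

lemma neg_one_sub_val_parity (p : ℕ) (hp : p.Prime) (hodd : Odd p) (x : ZMod p) :
    ((-1 - x : ZMod p)).val % 2 = x.val % 2 := by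
  haveI : NeZero p := ⟨hp.ne_zero⟩
  have hv : x.val < p := ZMod.val_lt x
  have h1 : ((p - 1 - x.val : ℕ) : ZMod p) = -1 - x := by
    have : ((p : ℕ) : ZMod p) = 0 := ZMod.natCast_self p
    push_cast [Nat.cast_sub (by omega : x.val ≤ p - 1), Nat.cast_sub hp.one_le]
    rw [ZMod.natCast_self, ZMod.natCast_val, ZMod.cast_id]
    ring
  have h2 : ((-1 - x : ZMod p)).val = p - 1 - x.val := by
    rw [← h1, ZMod.val_natCast_of_lt (by omega)]
  rw [h2]
  obtain ⟨k, hk⟩ := hodd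
  omega

/-- the p-adic reflected Gray code commutes with taking opposites:
`gc_n(x)^⊥ = gc_n(x^⊥)`. -/
theorem grayCode_perp (p n : ℕ) (hp : p.Prime) (hodd : Odd p) (hn : 1 ≤ n) :
    ∀ x : Fin n → ZMod p, perp p n (grayCode p n x) = grayCode p n (perp p n x) := by
  clear hn
  induction n with
  | zero => intro x; funext i; exact absurd i.2 (by omega)
  | succ n ih =>
    intro x
    have hpar : (perp p (n + 1) x (Fin.last n)).val % 2 = (x (Fin.last n)).val % 2 := by
      rw [perp_apply]
      exact neg_one_sub_val_parity p hp hodd _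
    funext i
    rcases Fin.eq_castSucc_or_eq_last i with ⟨j, rfl⟩ | rfl
    · show -1 - grayCode p (n+1) x (Fin.castSucc j) = _
      simp only [grayCode, hpar, Fin.snoc_castSucc]
      by_cases h : (x (Fin.last n)).val % 2 = 0
      · simp only [h, if_pos]
        have := congrFun (ih (Fin.init x)) j
        rw [perp_apply] at this
        rw [this, init_perp]
      · simp only [h, if_neg, if_false]
        have := congrFun (ih (perp p n (Fin.init x))) j
        rw [perp_apply] at this
        rw [this, init_perp, perp_perp]
    · show -1 - grayCode p (n+1) x (Fin.last n) = _
      simp only [grayCode, hpar, Fin.snoc_last]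
      rfl
end
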